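/- In a directed graph G, if B(v) denotes the set of labels of edges reachable along some directed path starting from vertex v (where each edge carries a label from a finite ordered set D), then adding a new edge from vertex u to vertex v with label d such that d ∉ B(v) does not create a directed cycle through the new edge, provided G was acyclic before. -/

import Mathlib

/-- Adding a new edge `u → v` labeled `d` (the label of its source channel `u`)
to an acyclic directed graph, where `d` does not occur among the labels of
vertices reachable from `v`, creates no directed cycle. -/
theorem stmt0 {V D : Type*} [Fintype V] [Fintype D] [LinearOrder D]
    (G : V → V → Prop) (label : V → D)
    (hacyc : ∀ x, ¬ Relation.TransGen G x x)
    (u v : V) (d : D) (hd : d = label u)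
    (hB : d ∉ {x : D | ∃ a, Relation.ReflTransGen G v a ∧ x = label a}) :
    ∀ x, ¬ Relation.TransGen (fun a b => G a b ∨ (a = u ∧ b = v)) x x := by
  set G' : V → V → Prop := fun a b => G a b ∨ (a = u ∧ b = v) with hG'
  -- reachability from v in G' coincides with reachability in G
  have hL : ∀ x, Relation.ReflTransGen G' v x → Relation.ReflTransGen G v x := by
    intro x h
    induction h with
    | refl => exact Relation.ReflTransGen.refl
    | tail hvb hbc ih =>
      rcases hbc with h' | ⟨hb, hc⟩
      · exact ih.tail h'
      · subst hc; exact Relation.ReflTransGen.refl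
  have hM : ∀ x y, Relation.TransGen G' x y →
      Relation.TransGen G x y ∨
        (Relation.ReflTransGen G' x u ∧ Relation.ReflTransGen G' v y) := by
    intro x y h
    induction h with
    | single hxy =>
      rcases hxy with h' | ⟨hx, hy⟩
      · exact Or.inl (Relation.TransGen.single h')
      · subst hx; subst hy; exact Or.inr ⟨Relation.ReflTransGen.refl, Relation.ReflTransGen.refl⟩
    | tail hxb hbc ih =>
      rcases hbc with h' | ⟨hb, hc⟩
      · rcases ih with h1 | ⟨h1, h2⟩
        · exact Or.inl (h1.tail h')
        · exact Or.inr ⟨h1, h2.tail (Or.inl h')⟩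
      · rcases ih with h1 | ⟨h1, h2⟩
        · subst hb; subst hc
          exact Or.inr ⟨Relation.ReflTransGen.mono (p := G') (fun a b hab => Or.inl hab) _ _ h1.to_reflTransGen,
            Relation.ReflTransGen.refl⟩
        · subst hc
          exact Or.inr ⟨h1, h2.tail (Or.inr ⟨hb, rfl⟩)⟩
  intro x hx
  rcases hM x x hx with h1 | ⟨h1, h2⟩
  · exact hacyc x h1
  · have : Relation.ReflTransGen G v u := hL u (h2.trans h1)
    exact hB ⟨u, this, hd⟩
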